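/- arXiv:2506.17419 — 2 statements merged into one kernel-verified Lean document; each statement's English description precedes it below -/
import Mathlib

section
/- Let t ≥ 2 and let P be a strictly positive joint probability mass function on a finite product S_1 × ⋯ × S_t with coordinate random variables Y_1, …, Y_t. For each prefix realization y = (y_1,…,y_{t−1}), define the one-step trajectory-dependent uncertainty ĝ(y) = H( P_{Y_t | Y_{1:t−1} = y_{1:t−1}} ) + Σ_{i=1}^{t−1} D( P_{Y_t | Y_{i:t−1} = y_{i:t−1}} ‖ P_{Y_t | Y_{i+1:t−1} = y_{i+1:t−1}} ), where for i = t−1 the second argument is the unconditional marginal P_{Y_t}. Then the expectation of ĝ over prefix realizations equals the marginal entropy: Σ_{y} P_{Y_1,…,Y_{t−1}}(y) · ĝ(y) = H(Y_t). In particular, the trajectory-dependent estimator of the total uncertainty at step t is unbiased. -/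
open Finset
open scoped Classical

/-- The conditional pmf of the last coordinate `Y_t` given that the preceding coordinates
with index `≥ k` (among the first `n + 1` coordinates) take the values prescribed by the
prefix realization `y`; i.e. `P_{Y_t | Y_{k:t−1} = y_{k:t−1}}(x)`.  For `k = 0` this
conditions on the whole prefix, and for `k = n + 1` the conditioning event is vacuous and
this is the unconditional marginal `P_{Y_t}`. -/
noncomputable def condLast {n : ℕ} {S : Fin (n + 2) → Type} [∀ i, Fintype (S i)]
    (P : (∀ i, S i) → ℝ) (k : ℕ) (y : ∀ i : Fin (n + 1), S i.castSucc)
    (x : S (Fin.last (n + 1))) : ℝ :=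
  (∑ w : ∀ i, S i,
      if w (Fin.last (n + 1)) = x ∧ (∀ j : Fin (n + 1), k ≤ (j : ℕ) → w j.castSucc = y j)
        then P w else 0) /
  (∑ w : ∀ i, S i,
      if (∀ j : Fin (n + 1), k ≤ (j : ℕ) → w j.castSucc = y j) then P w else 0)

/-- The one-step trajectory-dependent uncertainty
`ĝ(y) = H(P_{Y_t | Y_{1:t−1}=y}) + Σ_{i=1}^{t−1} D(P_{Y_t | Y_{i:t−1}=y_{i:t−1}} ‖
P_{Y_t | Y_{i+1:t−1}=y_{i+1:t−1}})`, where for the last summand the second argument is the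
unconditional marginal `P_{Y_t}`. -/
noncomputable def gHat {n : ℕ} {S : Fin (n + 2) → Type} [∀ i, Fintype (S i)]
    (P : (∀ i, S i) → ℝ) (y : ∀ i : Fin (n + 1), S i.castSucc) : ℝ :=
  (-∑ x : S (Fin.last (n + 1)), condLast P 0 y x * Real.log (condLast P 0 y x)) +
    ∑ i : Fin (n + 1), ∑ x : S (Fin.last (n + 1)),
      condLast P (i : ℕ) y x *
        Real.log (condLast P (i : ℕ) y x / condLast P ((i : ℕ) + 1) y x)

section helpers
set_option linter.unusedSectionVars false
variable {n : ℕ} {S : Fin (n + 2) → Type} [∀ i, Fintype (S i)]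

lemma ite_congr' {p q : Prop} {hp : Decidable p} {hq : Decidable q} (h : p ↔ q)
    (a b : ℝ) : @ite ℝ p hp a b = @ite ℝ q hq a b := by
  rcases em p with h1 | h1
  · rw [if_pos h1, if_pos (h.mp h1)]
  · rw [if_neg h1, if_neg (fun hh => h1 (h.mpr hh))]

def Agrees (k : ℕ) (u v : ∀ i, S i) : Prop :=
  ∀ j : Fin (n + 1), k ≤ (j : ℕ) → u j.castSucc = v j.castSucc

lemma agrees_symm {k : ℕ} {u v : ∀ i, S i} (h : Agrees k u v) : Agrees k v u :=
  fun j hj => (h j hj).symm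

lemma agrees_mono {k k' : ℕ} (hk : k ≤ k') {u v : ∀ i, S i} (h : Agrees k u v) :
    Agrees k' u v := fun j hj => h j (hk.trans hj)

noncomputable def Anum (P : (∀ i, S i) → ℝ) (k : ℕ) (v : ∀ i, S i)
    (x : S (Fin.last (n + 1))) : ℝ :=
  ∑ u : ∀ i, S i, if u (Fin.last (n + 1)) = x ∧ Agrees k u v then P u else 0

noncomputable def Bden (P : (∀ i, S i) → ℝ) (k : ℕ) (v : ∀ i, S i) : ℝ :=
  ∑ u : ∀ i, S i, if Agrees k u v then P u else 0

lemma condLast_pre (P : (∀ i, S i) → ℝ) (k : ℕ) (v : ∀ i, S i)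
    (x : S (Fin.last (n + 1))) :
    condLast P k (fun j => v j.castSucc) x = Anum P k v x / Bden P k v := by
  unfold condLast Anum Bden Agrees
  exact congrArg₂ (· / ·) (Finset.sum_congr rfl fun w _ => ite_congr' Iff.rfl _ _)
    (Finset.sum_congr rfl fun w _ => ite_congr' Iff.rfl _ _)

lemma Bden_pos (P : (∀ i, S i) → ℝ) (hpos : ∀ w, 0 < P w) (k : ℕ) (v : ∀ i, S i) :
    0 < Bden P k v := by
  refine Finset.sum_pos' (fun u _ => ?_) ⟨v, Finset.mem_univ _, ?_⟩
  · split_ifs with h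
    · exact (hpos u).le
    · exact le_refl 0
  · have hv : Agrees k v v := fun j _ => rfl
    rw [if_pos hv]; exact hpos v

lemma Anum_pos (P : (∀ i, S i) → ℝ) (hpos : ∀ w, 0 < P w) (k : ℕ) (v : ∀ i, S i)
    (x : S (Fin.last (n + 1))) : 0 < Anum P k v x := by
  refine Finset.sum_pos' (fun u _ => ?_)
    ⟨Fin.snoc (fun j => v j.castSucc) x, Finset.mem_univ _, ?_⟩
  · split_ifs with h
    · exact (hpos u).le
    · exact le_refl 0
  · have hv : Fin.snoc (fun j => v j.castSucc) x (Fin.last (n+1)) = x ∧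
        Agrees k (Fin.snoc (fun j => v j.castSucc) x) v :=
      ⟨Fin.snoc_last _ _, fun j _ => Fin.snoc_castSucc _ _ _⟩
    rw [if_pos hv]; exact hpos _

lemma condLast_pre_pos (P : (∀ i, S i) → ℝ) (hpos : ∀ w, 0 < P w) (k : ℕ)
    (v : ∀ i, S i) (x : S (Fin.last (n + 1))) :
    0 < condLast P k (fun j => v j.castSucc) x := by
  rw [condLast_pre]
  exact div_pos (Anum_pos P hpos k v x) (Bden_pos P hpos k v)

lemma Bden_congr (P : (∀ i, S i) → ℝ) (k : ℕ) {u v : ∀ i, S i} (h : Agrees k u v) :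
    Bden P k u = Bden P k v := by
  refine Finset.sum_congr rfl fun w _ => ?_
  refine ite_congr' (forall_congr' fun j => imp_congr_right fun hj => ?_) _ _
  rw [h j hj]

lemma Anum_congr (P : (∀ i, S i) → ℝ) (k : ℕ) {u v : ∀ i, S i} (h : Agrees k u v)
    (x : S (Fin.last (n + 1))) : Anum P k u x = Anum P k v x := by
  refine Finset.sum_congr rfl fun w _ => ?_
  refine ite_congr' (and_congr_right fun _ =>
    forall_congr' fun j => imp_congr_right fun hj => ?_) _ _
  rw [h j hj]

lemma condLast_pre_congr (P : (∀ i, S i) → ℝ) (k : ℕ) {u v : ∀ i, S i}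
    (h : Agrees k u v) (x : S (Fin.last (n + 1))) :
    condLast P k (fun j => u j.castSucc) x = condLast P k (fun j => v j.castSucc) x := by
  rw [condLast_pre, condLast_pre, Anum_congr P k h x, Bden_congr P k h]

lemma Bden_symm (P : (∀ i, S i) → ℝ) (k : ℕ) (u : ∀ i, S i) :
    Bden P k u = ∑ v : ∀ i, S i, if Agrees k u v then P v else 0 := by
  refine Finset.sum_congr rfl fun w _ => ?_
  exact ite_congr' ⟨agrees_symm, agrees_symm⟩ _ _

lemma tower (P : (∀ i, S i) → ℝ) (hpos : ∀ w, 0 < P w) (k : ℕ)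
    (x : S (Fin.last (n + 1))) (G : (∀ i, S i) → ℝ)
    (hG : ∀ u v, Agrees k u v → G u = G v) :
    ∑ v : ∀ i, S i, P v * (condLast P k (fun j => v j.castSucc) x * G v)
      = ∑ v : ∀ i, S i, (if v (Fin.last (n + 1)) = x then P v else 0) * G v := by
  have key : ∀ v, P v * (condLast P k (fun j => v j.castSucc) x * G v)
      = ∑ u : ∀ i, S i, (if u (Fin.last (n + 1)) = x ∧ Agrees k u v then P u else 0)
          * (P v * G v / Bden P k v) := by
    intro v
    rw [condLast_pre, ← Finset.sum_mul]
    show P v * (Anum P k v x / Bden P k v * G v) = Anum P k v x * (P v * G v / Bden P k v)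
    have hB := (Bden_pos P hpos k v).ne'
    field_simp
  rw [Finset.sum_congr rfl fun v _ => key v, Finset.sum_comm]
  refine Finset.sum_congr rfl fun u _ => ?_
  by_cases hx : u (Fin.last (n + 1)) = x
  · have h1 : ∀ v, (if u (Fin.last (n + 1)) = x ∧ Agrees k u v then P u else 0)
        * (P v * G v / Bden P k v)
        = P u * G u / Bden P k u * (if Agrees k u v then P v else 0) := by
      intro v
      by_cases h : Agrees k u v
      · rw [if_pos ⟨hx, h⟩, if_pos h, hG u v h, Bden_congr P k h]
        ring
      · rw [if_neg (fun hh => h hh.2), if_neg h, zero_mul, mul_zero]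
    rw [Finset.sum_congr rfl fun v _ => h1 v, ← Finset.mul_sum, ← Bden_symm,
      div_mul_cancel₀ _ (Bden_pos P hpos k u).ne', if_pos hx]
  · rw [if_neg hx, zero_mul]
    refine Finset.sum_eq_zero fun v _ => ?_
    rw [if_neg (fun hh => hx hh.1), zero_mul]

lemma condLast_top (P : (∀ i, S i) → ℝ) (hsum : ∑ w : ∀ i, S i, P w = 1)
    (y : ∀ i : Fin (n + 1), S i.castSucc) (x : S (Fin.last (n + 1))) :
    condLast P (n + 1) y x
      = ∑ w : ∀ i, S i, if w (Fin.last (n + 1)) = x then P w else 0 := by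
  have vac : ∀ w : ∀ i, S i,
      (∀ j : Fin (n + 1), n + 1 ≤ (j : ℕ) → w j.castSucc = y j) := by
    intro w j hj
    exact absurd hj (Nat.not_le.mpr j.isLt)
  unfold condLast
  have hden : (∑ w : ∀ i, S i,
      if (∀ j : Fin (n + 1), n + 1 ≤ (j : ℕ) → w j.castSucc = y j) then P w else 0) = 1 := by
    rw [Finset.sum_congr rfl fun w _ => if_pos (vac w)]
    exact hsum
  rw [hden, div_one]
  exact Finset.sum_congr rfl fun w _ => ite_congr' (and_iff_left (vac w)) _ _

end helpers

/-- For a strictly positive joint pmf on `t = n + 2 ≥ 2` coordinates, the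
expectation over prefix realizations of the one-step trajectory-dependent uncertainty `ĝ`
equals the marginal entropy of the last coordinate:
`Σ_y P_{Y_1,…,Y_{t−1}}(y) · ĝ(y) = H(Y_t)`; the estimator is unbiased. -/
theorem gHat_unbiased
    {n : ℕ} {S : Fin (n + 2) → Type} [∀ i, Fintype (S i)]
    (P : (∀ i, S i) → ℝ) (hpos : ∀ w, 0 < P w) (hsum : ∑ w, P w = 1) :
    (∑ y : ∀ i : Fin (n + 1), S i.castSucc,
        (∑ w : ∀ i, S i, if (∀ j : Fin (n + 1), w j.castSucc = y j) then P w else 0) *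
          gHat P y) =
      -∑ x : S (Fin.last (n + 1)),
        (∑ w : ∀ i, S i, if w (Fin.last (n + 1)) = x then P w else 0) *
          Real.log (∑ w : ∀ i, S i, if w (Fin.last (n + 1)) = x then P w else 0) := by
  classical
  set c : ℕ → (∀ i, S i) → S (Fin.last (n + 1)) → ℝ :=
    fun k v x => condLast P k (fun j => v j.castSucc) x with hc
  -- Step 1: rewrite the expectation as a sum over full trajectories
  have step1 : (∑ y : ∀ i : Fin (n + 1), S i.castSucc,
        (∑ w : ∀ i, S i, if (∀ j : Fin (n + 1), w j.castSucc = y j) then P w else 0) *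
          gHat P y)
      = ∑ v : ∀ i, S i, P v * gHat P (fun j => v j.castSucc) := by
    have h1 : ∀ y : ∀ i : Fin (n + 1), S i.castSucc,
        (∑ w : ∀ i, S i, if (∀ j : Fin (n + 1), w j.castSucc = y j) then P w else 0)
            * gHat P y
        = ∑ w : ∀ i, S i,
            if (fun j : Fin (n + 1) => w j.castSucc) = y then P w * gHat P y else 0 := by
      intro y
      rw [Finset.sum_mul]
      refine Finset.sum_congr rfl fun w _ => ?_
      by_cases h : ∀ j : Fin (n + 1), w j.castSucc = y j
      · rw [if_pos h, if_pos (funext h)]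
      · rw [if_neg h, if_neg (fun he => h fun j => congrFun he j), zero_mul]
    rw [Finset.sum_congr rfl fun y _ => h1 y, Finset.sum_comm]
    refine Finset.sum_congr rfl fun w _ => ?_
    rw [Finset.sum_ite_eq, if_pos (Finset.mem_univ _)]
  rw [step1]
  -- Step 2: expand gHat and distribute P v
  have expand : ∀ v : ∀ i, S i, P v * gHat P (fun j => v j.castSucc)
      = (∑ x : S (Fin.last (n + 1)), -(P v * (c 0 v x * Real.log (c 0 v x))))
        + ∑ i : Fin (n + 1), ∑ x : S (Fin.last (n + 1)),
            P v * (c (i : ℕ) v x *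
              (Real.log (c (i : ℕ) v x) - Real.log (c ((i : ℕ) + 1) v x))) := by
    intro v
    rw [gHat, mul_add]
    congr 1
    · rw [Finset.sum_neg_distrib, mul_neg, Finset.mul_sum]
    · rw [Finset.mul_sum]
      refine Finset.sum_congr rfl fun i _ => ?_
      rw [Finset.mul_sum]
      refine Finset.sum_congr rfl fun x _ => ?_
      rw [Real.log_div (condLast_pre_pos P hpos _ v x).ne'
        (condLast_pre_pos P hpos _ v x).ne']
  rw [Finset.sum_congr rfl fun v _ => expand v, Finset.sum_add_distrib]
  -- Step 3: apply the tower property to each term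
  have hGcongr : ∀ (k : ℕ) (x : S (Fin.last (n + 1))) (u v : ∀ i, S i),
      Agrees k u v → Real.log (c k u x) = Real.log (c k v x) := by
    intro k x u v h
    simp only [hc]
    rw [condLast_pre_congr P k h x]
  have term1 : (∑ v : ∀ i, S i, ∑ x : S (Fin.last (n + 1)),
        -(P v * (c 0 v x * Real.log (c 0 v x))))
      = -∑ x : S (Fin.last (n + 1)), ∑ v : ∀ i, S i,
          (if v (Fin.last (n + 1)) = x then P v else 0) * Real.log (c 0 v x) := by
    have e1 : ∀ v : ∀ i, S i, (∑ x : S (Fin.last (n + 1)),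
        -(P v * (c 0 v x * Real.log (c 0 v x))))
        = -(∑ x : S (Fin.last (n + 1)), P v * (c 0 v x * Real.log (c 0 v x))) :=
      fun v => Finset.sum_neg_distrib _
    rw [Finset.sum_congr rfl fun v _ => e1 v, Finset.sum_neg_distrib, Finset.sum_comm]
    refine congrArg Neg.neg (Finset.sum_congr rfl fun x _ => ?_)
    exact tower P hpos 0 x (fun v => Real.log (c 0 v x)) (hGcongr 0 x)
  have term2 : (∑ v : ∀ i, S i, ∑ i : Fin (n + 1), ∑ x : S (Fin.last (n + 1)),
        P v * (c (i : ℕ) v x *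
          (Real.log (c (i : ℕ) v x) - Real.log (c ((i : ℕ) + 1) v x))))
      = ∑ x : S (Fin.last (n + 1)), ∑ v : ∀ i, S i, ∑ i : Fin (n + 1),
          (if v (Fin.last (n + 1)) = x then P v else 0) *
            (Real.log (c (i : ℕ) v x) - Real.log (c ((i : ℕ) + 1) v x)) := by
    rw [Finset.sum_comm]
    have h2 : ∀ i : Fin (n + 1), (∑ v : ∀ i, S i, ∑ x : S (Fin.last (n + 1)),
          P v * (c (i : ℕ) v x *
            (Real.log (c (i : ℕ) v x) - Real.log (c ((i : ℕ) + 1) v x))))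
        = ∑ x : S (Fin.last (n + 1)), ∑ v : ∀ i, S i,
            (if v (Fin.last (n + 1)) = x then P v else 0) *
              (Real.log (c (i : ℕ) v x) - Real.log (c ((i : ℕ) + 1) v x)) := by
      intro i
      rw [Finset.sum_comm]
      refine Finset.sum_congr rfl fun x _ => ?_
      refine tower P hpos (i : ℕ) x
        (fun v => Real.log (c (i : ℕ) v x) - Real.log (c ((i : ℕ) + 1) v x)) ?_
      intro u v h
      rw [hGcongr (i : ℕ) x u v h,
        hGcongr ((i : ℕ) + 1) x u v (agrees_mono (Nat.le_succ _) h)]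
    rw [Finset.sum_congr rfl fun i _ => h2 i, Finset.sum_comm]
    exact Finset.sum_congr rfl fun x _ => Finset.sum_comm
  rw [term1, term2, neg_add_eq_sub, ← Finset.sum_sub_distrib, ← Finset.sum_neg_distrib]
  -- Step 4: telescope and identify the marginal
  refine Finset.sum_congr rfl fun x _ => ?_
  rw [← Finset.sum_sub_distrib]
  have step4 : ∀ v : ∀ i, S i,
      (∑ i : Fin (n + 1), (if v (Fin.last (n + 1)) = x then P v else 0) *
          (Real.log (c (i : ℕ) v x) - Real.log (c ((i : ℕ) + 1) v x)))
        - (if v (Fin.last (n + 1)) = x then P v else 0) * Real.log (c 0 v x)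
      = -((if v (Fin.last (n + 1)) = x then P v else 0) *
          Real.log (∑ w : ∀ i, S i, if w (Fin.last (n + 1)) = x then P w else 0)) := by
    intro v
    have htel : (∑ i : Fin (n + 1),
        (Real.log (c (i : ℕ) v x) - Real.log (c ((i : ℕ) + 1) v x)))
        = Real.log (c 0 v x) - Real.log (c (n + 1) v x) := by
      rw [Fin.sum_univ_eq_sum_range
        (fun k => Real.log (c k v x) - Real.log (c (k + 1) v x)) (n + 1)]
      exact Finset.sum_range_sub' (fun k => Real.log (c k v x)) (n + 1)
    rw [← Finset.mul_sum, htel]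
    simp only [hc]
    rw [condLast_top P hsum (fun j => v j.castSucc) x]
    ring
  rw [Finset.sum_congr rfl fun v _ => step4 v, Finset.sum_neg_distrib, ← Finset.sum_mul]
end

section
/- (Convergence of TDP sampling.) Let T ≥ 1 and let P be a strictly positive joint probability mass function on a finite product S_1 × ⋯ × S_T with coordinate random variables Y_1, …, Y_T. Define G : S_1 × ⋯ × S_T → ℝ by G(y_1,…,y_T) = Σ_{t=1}^T [ H( P_{Y_t | Y_{1:t−1} = y_{1:t−1}} ) + Σ_{i=1}^{t−1} D( P_{Y_t | Y_{i:t−1} = y_{i:t−1}} ‖ P_{Y_t | Y_{i+1:t−1} = y_{i+1:t−1}} ) ], where empty conditioning blocks denote the unconditional marginal P_{Y_t}. If W_1, W_2, … is a sequence of independent, identically distributed random variables on a probability space, each with distribution P, then the sample average (1/Z) Σ_{z=1}^Z G(W_z) converges almost surely, as Z → ∞, to Σ_{t=1}^T H(Y_t), the sum of the marginal entropies; moreover, the estimator is unbiased: E[G(W_1)] = Σ_{t=1}^T H(Y_t). -/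
open Finset MeasureTheory ProbabilityTheory
open scoped Classical

/-- The conditional pmf of the coordinate `Y_t` given that the coordinates `Y_j` with
`k ≤ j < t` take the values prescribed by the realization `y`; i.e.
`P_{Y_t | Y_{k:t−1} = y_{k:t−1}}(x)`.  When the conditioning block is empty (e.g. `k ≥ t`)
this is the unconditional marginal `P_{Y_t}`. -/
noncomputable def condAt {m : ℕ} {S : Fin m → Type} [∀ i, Fintype (S i)]
    (P : (∀ i, S i) → ℝ) (t : Fin m) (k : ℕ) (y : ∀ i, S i) (x : S t) : ℝ :=
  (∑ w : ∀ i, S i,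
      if w t = x ∧ (∀ j : Fin m, k ≤ (j : ℕ) ∧ (j : ℕ) < (t : ℕ) → w j = y j)
        then P w else 0) /
  (∑ w : ∀ i, S i,
      if (∀ j : Fin m, k ≤ (j : ℕ) ∧ (j : ℕ) < (t : ℕ) → w j = y j) then P w else 0)

/-- The marginal pmf of the coordinate `Y_t`. -/
noncomputable def margAt {m : ℕ} {S : Fin m → Type} [∀ i, Fintype (S i)]
    (P : (∀ i, S i) → ℝ) (t : Fin m) (x : S t) : ℝ :=
  ∑ w : ∀ i, S i, if w t = x then P w else 0

/-- The total trajectory-dependent uncertainty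
`G(y) = Σ_t [ H(P_{Y_t | Y_{1:t−1}=y_{1:t−1}}) +
Σ_{i=1}^{t−1} D(P_{Y_t | Y_{i:t−1}=y_{i:t−1}} ‖ P_{Y_t | Y_{i+1:t−1}=y_{i+1:t−1}}) ]`,
where empty conditioning blocks denote the unconditional marginal. -/
noncomputable def G {m : ℕ} {S : Fin m → Type} [∀ i, Fintype (S i)]
    (P : (∀ i, S i) → ℝ) (y : ∀ i, S i) : ℝ :=
  ∑ t : Fin m,
    ((-∑ x : S t, condAt P t 0 y x * Real.log (condAt P t 0 y x)) +
      ∑ i ∈ Finset.range (t : ℕ), ∑ x : S t,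
        condAt P t i y x * Real.log (condAt P t i y x / condAt P t (i + 1) y x))

set_option linter.unusedSectionVars false

section TDPaux

variable {m : ℕ} {S : Fin m → Type} [∀ i, Fintype (S i)]

/-- agreement of `w` and `y` on the block `[k, t)`. -/
abbrev Agr (t : Fin m) (k : ℕ) (w y : ∀ i, S i) : Prop :=
  ∀ j : Fin m, k ≤ (j : ℕ) ∧ (j : ℕ) < (t : ℕ) → w j = y j

lemma Agr.rfl {t : Fin m} {k : ℕ} {y : ∀ i, S i} : Agr t k y y := fun _ _ => _root_.rfl

lemma Agr.symm' {t : Fin m} {k : ℕ} {w y : ∀ i, S i} (h : Agr t k w y) : Agr t k y w :=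
  fun j hj => (h j hj).symm

lemma Agr.trans' {t : Fin m} {k : ℕ} {u w y : ∀ i, S i} (h1 : Agr t k u w)
    (h2 : Agr t k w y) : Agr t k u y := fun j hj => (h1 j hj).trans (h2 j hj)

lemma Agr.mono {t : Fin m} {k : ℕ} {w y : ∀ i, S i} (h : Agr t k w y) :
    Agr t (k + 1) w y := fun j hj => h j ⟨by omega, hj.2⟩

noncomputable def numAt (P : (∀ i, S i) → ℝ) (t : Fin m) (k : ℕ) (y : ∀ i, S i)
    (x : S t) : ℝ := ∑ w : ∀ i, S i, if w t = x ∧ Agr t k w y then P w else 0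

noncomputable def denAt (P : (∀ i, S i) → ℝ) (t : Fin m) (k : ℕ) (y : ∀ i, S i) : ℝ :=
  ∑ w : ∀ i, S i, if Agr t k w y then P w else 0

lemma condAt_eq (P : (∀ i, S i) → ℝ) (t : Fin m) (k : ℕ) (y : ∀ i, S i) (x : S t) :
    condAt P t k y x = numAt P t k y x / denAt P t k y := _root_.rfl

variable {P : (∀ i, S i) → ℝ}

lemma denAt_pos (hpos : ∀ w, 0 < P w) (t : Fin m) (k : ℕ) (y : ∀ i, S i) :
    0 < denAt P t k y := by
  have h1 : P y ≤ denAt P t k y := by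
    have := Finset.single_le_sum
      (f := fun w : ∀ i, S i => if Agr t k w y then P w else 0)
      (fun w _ => by split <;> [exact (hpos w).le; exact le_rfl]) (Finset.mem_univ y)
    rw [if_pos (Agr.rfl)] at this
    exact this
  exact lt_of_lt_of_le (hpos y) h1

lemma numAt_pos (hpos : ∀ w, 0 < P w) (t : Fin m) (k : ℕ) (y : ∀ i, S i) (x : S t) :
    0 < numAt P t k y x := by
  set w0 : ∀ i, S i := Function.update y t x with hw0
  have hw0t : w0 t = x := Function.update_self t x y
  have hagr : Agr t k w0 y := by
    intro j hj
    have hne : j ≠ t := by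
      intro h; subst h; omega
    exact Function.update_of_ne hne x y
  have h1 : P w0 ≤ numAt P t k y x := by
    have := Finset.single_le_sum
      (f := fun w : ∀ i, S i => if w t = x ∧ Agr t k w y then P w else 0)
      (fun w _ => by split <;> [exact (hpos w).le; exact le_rfl]) (Finset.mem_univ w0)
    rw [if_pos (⟨hw0t, hagr⟩ : w0 t = x ∧ Agr t k w0 y)] at this
    exact this
  exact lt_of_lt_of_le (hpos w0) h1

lemma condAt_pos (hpos : ∀ w, 0 < P w) (t : Fin m) (k : ℕ) (y : ∀ i, S i) (x : S t) :
    0 < condAt P t k y x := by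
  rw [condAt_eq]
  exact div_pos (numAt_pos hpos t k y x) (denAt_pos hpos t k y)

lemma denAt_congr {t : Fin m} {k : ℕ} {y y' : ∀ i, S i} (h : Agr t k y y') :
    denAt P t k y = denAt P t k y' := by
  refine Finset.sum_congr rfl fun w _ => ?_
  exact if_congr ⟨fun hw => hw.trans' h, fun hw => hw.trans' h.symm'⟩ rfl rfl

lemma numAt_congr {t : Fin m} {k : ℕ} {y y' : ∀ i, S i} (h : Agr t k y y') (x : S t) :
    numAt P t k y x = numAt P t k y' x := by
  refine Finset.sum_congr rfl fun w _ => ?_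
  exact if_congr (and_congr_right fun _ =>
    ⟨fun hw => hw.trans' h, fun hw => hw.trans' h.symm'⟩) rfl rfl

lemma condAt_congr {t : Fin m} {k : ℕ} {y y' : ∀ i, S i} (h : Agr t k y y') (x : S t) :
    condAt P t k y x = condAt P t k y' x := by
  rw [condAt_eq, condAt_eq, denAt_congr h, numAt_congr h]

/-- The key marginalization identity. -/
lemma key_marg (hpos : ∀ w, 0 < P w) (t : Fin m) (k : ℕ) (x : S t)
    (g : (∀ i, S i) → ℝ) (hg : ∀ w y, Agr t k w y → g w = g y) :
    ∑ y, P y * (condAt P t k y x * g y)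
      = ∑ y, (if y t = x then P y * g y else 0) := by
  have step1 : ∀ y : ∀ i, S i, P y * (condAt P t k y x * g y)
      = ∑ v, (if v t = x ∧ Agr t k v y then P v * (P y * g y / denAt P t k y) else 0) := by
    intro y
    have h0 : P y * (numAt P t k y x / denAt P t k y * g y)
        = numAt P t k y x * (P y * g y / denAt P t k y) := by ring
    rw [condAt_eq, h0, numAt, Finset.sum_mul]
    exact Finset.sum_congr rfl fun v _ => by rw [ite_mul, zero_mul]
  rw [Finset.sum_congr rfl fun y _ => step1 y, Finset.sum_comm]
  refine Finset.sum_congr rfl fun v _ => ?_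
  by_cases hvx : v t = x
  · rw [if_pos hvx]
    have h1 : ∀ y : ∀ i, S i,
        (if v t = x ∧ Agr t k v y then P v * (P y * g y / denAt P t k y) else 0)
          = (if Agr t k v y then P y else 0) * (P v * g v / denAt P t k v) := by
      intro y
      by_cases hA : Agr t k v y
      · rw [if_pos ⟨hvx, hA⟩, if_pos hA, hg v y hA, denAt_congr hA.symm']
        ring
      · rw [if_neg (fun h => hA h.2), if_neg hA, zero_mul]
    rw [Finset.sum_congr rfl fun y _ => h1 y, ← Finset.sum_mul]
    have hden : (∑ y : ∀ i, S i, if Agr t k v y then P y else 0) = denAt P t k v :=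
      Finset.sum_congr rfl fun y _ => if_congr ⟨Agr.symm', Agr.symm'⟩ rfl rfl
    rw [hden, mul_comm, div_mul_cancel₀ _ (ne_of_gt (denAt_pos hpos t k v))]
  · rw [if_neg hvx]
    exact Finset.sum_eq_zero fun y _ => if_neg (fun h => hvx h.1)

noncomputable def Ek (P : (∀ i, S i) → ℝ) (t : Fin m) (k : ℕ) : ℝ :=
  ∑ y, P y * ∑ x, condAt P t k y x * Real.log (condAt P t k y x)

lemma Ek_eq (hpos : ∀ w, 0 < P w) (t : Fin m) (k : ℕ) :
    Ek P t k = ∑ x, ∑ y, (if y t = x then P y * Real.log (condAt P t k y x) else 0) := by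
  rw [Ek]
  simp_rw [Finset.mul_sum]
  rw [Finset.sum_comm]
  refine Finset.sum_congr rfl fun x _ => ?_
  rw [← key_marg hpos t k x (fun y => Real.log (condAt P t k y x))
    (fun w y h => by rw [condAt_congr h])]

lemma cross_eq (hpos : ∀ w, 0 < P w) (t : Fin m) (k : ℕ) :
    (∑ y, P y * ∑ x, condAt P t k y x * Real.log (condAt P t (k + 1) y x)) = Ek P t (k + 1) := by
  rw [Ek_eq hpos t (k + 1)]
  simp_rw [Finset.mul_sum]
  rw [Finset.sum_comm]
  refine Finset.sum_congr rfl fun x _ => ?_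
  rw [← key_marg hpos t k x (fun y => Real.log (condAt P t (k + 1) y x))
    (fun w y h => by rw [condAt_congr h.mono])]

lemma condAt_self (hsum : ∑ w, P w = 1) (t : Fin m) (y : ∀ i, S i) (x : S t) :
    condAt P t (t : ℕ) y x = margAt P t x := by
  have htriv : ∀ w : ∀ i, S i,
      ∀ j : Fin m, (t : ℕ) ≤ (j : ℕ) ∧ (j : ℕ) < (t : ℕ) → w j = y j :=
    fun w j hj => absurd hj (by omega)
  rw [condAt_eq, numAt, denAt]
  have h1 : numAt P t (t : ℕ) y x = margAt P t x := by
    rw [numAt, margAt]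
    exact Finset.sum_congr rfl fun w _ => if_congr (and_iff_left (htriv w)) rfl rfl
  have h2 : denAt P t (t : ℕ) y = 1 := by
    rw [denAt, ← hsum]
    exact Finset.sum_congr rfl fun w _ => if_pos (htriv w)
  rw [← numAt, ← denAt, h1, h2, div_one]

lemma Ek_self (hsum : ∑ w, P w = 1) (t : Fin m) :
    Ek P t (t : ℕ) = ∑ x, margAt P t x * Real.log (margAt P t x) := by
  rw [Ek]
  have h : ∀ y : ∀ i, S i, (∑ x, condAt P t (t : ℕ) y x * Real.log (condAt P t (t : ℕ) y x))
      = ∑ x, margAt P t x * Real.log (margAt P t x) :=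
    fun y => Finset.sum_congr rfl fun x _ => by rw [condAt_self hsum]
  rw [Finset.sum_congr rfl fun y _ => by rw [h y], ← Finset.sum_mul, hsum, one_mul]

end TDPaux

lemma main_id {m : ℕ} {S : Fin m → Type} [∀ i, Fintype (S i)]
    {P : (∀ i, S i) → ℝ} (hpos : ∀ w, 0 < P w) (hsum : ∑ w, P w = 1) :
    ∑ y, P y * G P y
      = ∑ t : Fin m, -∑ x : S t, margAt P t x * Real.log (margAt P t x) := by
  simp_rw [G, Finset.mul_sum]
  rw [Finset.sum_comm]
  refine Finset.sum_congr rfl fun t _ => ?_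
  have hA : ∑ y, P y * (-∑ x, condAt P t 0 y x * Real.log (condAt P t 0 y x))
      = -Ek P t 0 := by
    rw [Ek, ← Finset.sum_neg_distrib]
    exact Finset.sum_congr rfl fun y _ => mul_neg _ _
  have hB : ∑ y, P y * (∑ i ∈ Finset.range (t : ℕ), ∑ x,
        condAt P t i y x * Real.log (condAt P t i y x / condAt P t (i + 1) y x))
      = Ek P t 0 - Ek P t (t : ℕ) := by
    have h1 : ∀ y : ∀ i, S i, P y * (∑ i ∈ Finset.range (t : ℕ), ∑ x,
          condAt P t i y x * Real.log (condAt P t i y x / condAt P t (i + 1) y x))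
        = ∑ i ∈ Finset.range (t : ℕ),
            (P y * ∑ x, condAt P t i y x * Real.log (condAt P t i y x)
              - P y * ∑ x, condAt P t i y x * Real.log (condAt P t (i + 1) y x)) := by
      intro y
      rw [Finset.mul_sum]
      refine Finset.sum_congr rfl fun i _ => ?_
      rw [← mul_sub, ← Finset.sum_sub_distrib]
      congr 1
      refine Finset.sum_congr rfl fun x _ => ?_
      rw [Real.log_div (ne_of_gt (condAt_pos hpos t i y x))
        (ne_of_gt (condAt_pos hpos t (i + 1) y x)), mul_sub]
    rw [Finset.sum_congr rfl fun y _ => h1 y, Finset.sum_comm]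
    have h2 : ∀ i ∈ Finset.range (t : ℕ),
        (∑ y, (P y * ∑ x, condAt P t i y x * Real.log (condAt P t i y x)
          - P y * ∑ x, condAt P t i y x * Real.log (condAt P t (i + 1) y x)))
        = -(Ek P t (i + 1) - Ek P t i) := by
      intro i _
      rw [Finset.sum_sub_distrib,
        show (∑ y, P y * ∑ x, condAt P t i y x * Real.log (condAt P t i y x))
          = Ek P t i from rfl,
        cross_eq hpos t i]
      ring
    rw [Finset.sum_congr rfl h2, Finset.sum_neg_distrib,
      Finset.sum_range_sub (fun i => Ek P t i), neg_sub]
  calc ∑ y, P y * ((-∑ x, condAt P t 0 y x * Real.log (condAt P t 0 y x)) +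
          ∑ i ∈ Finset.range (t : ℕ), ∑ x,
            condAt P t i y x * Real.log (condAt P t i y x / condAt P t (i + 1) y x))
      = (∑ y, P y * (-∑ x, condAt P t 0 y x * Real.log (condAt P t 0 y x)))
        + ∑ y, P y * (∑ i ∈ Finset.range (t : ℕ), ∑ x,
            condAt P t i y x * Real.log (condAt P t i y x / condAt P t (i + 1) y x)) := by
        rw [← Finset.sum_add_distrib]
        exact Finset.sum_congr rfl fun y _ => mul_add _ _ _
    _ = -Ek P t 0 + (Ek P t 0 - Ek P t (t : ℕ)) := by rw [hA, hB]
    _ = -∑ x, margAt P t x * Real.log (margAt P t x) := by rw [Ek_self hsum]; ring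

/-- (Convergence of TDP sampling.)  For a strictly positive joint pmf `P`
on `T + 1 ≥ 1` coordinates and an i.i.d. sequence `W₁, W₂, …` with distribution `P`, the
sample average `(1/Z) Σ_{z<Z} G (W z)` converges almost surely to the sum of the marginal
entropies `Σ_t H(Y_t)`, and the estimator is unbiased: `E[G(W₁)] = Σ_t H(Y_t)`. -/
theorem tdp_sampling_converges
    {T : ℕ} {S : Fin (T + 1) → Type} [∀ i, Fintype (S i)]
    (P : (∀ i, S i) → ℝ) (hpos : ∀ w, 0 < P w) (hsum : ∑ w, P w = 1)
    {Ω : Type} [MeasurableSpace Ω] (μ : Measure Ω) [IsProbabilityMeasure μ]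
    (W : ℕ → Ω → ∀ i, S i)
    (hmeas : ∀ z, @Measurable Ω (∀ i, S i) _ ⊤ (W z))
    (hindep : iIndepFun (m := fun _ : ℕ => (⊤ : MeasurableSpace (∀ i, S i))) W μ)
    (hdist : ∀ z, ∀ s : ∀ i, S i, μ {ω | W z ω = s} = ENNReal.ofReal (P s)) :
    (∀ᵐ ω ∂μ, Filter.Tendsto
        (fun Z : ℕ => ((1 : ℝ) / Z) * ∑ z ∈ Finset.range Z, G P (W z ω))
        Filter.atTop
        (nhds (∑ t : Fin (T + 1),
          -∑ x : S t, margAt P t x * Real.log (margAt P t x)))) ∧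
      (∫ ω, G P (W 0 ω) ∂μ =
        ∑ t : Fin (T + 1), -∑ x : S t, margAt P t x * Real.log (margAt P t x)) := by
  letI : MeasurableSpace (∀ i, S i) := ⊤
  set f : (∀ i, S i) → ℝ := G P with hf
  have hset : ∀ z (s : ∀ i, S i), MeasurableSet {ω | W z ω = s} :=
    fun z s => hmeas z (show MeasurableSet ({s} : Set (∀ i, S i)) from trivial)
  have hdecomp : ∀ z, (fun ω => f (W z ω))
      = fun ω => ∑ s, Set.indicator {ω' | W z ω' = s} (fun _ => f s) ω := by
    intro z
    funext ω
    simp only [Set.indicator_apply, Set.mem_setOf_eq]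
    rw [Finset.sum_ite_eq (Finset.univ) (W z ω) (fun s => f s)]
    simp
  have hindic : ∀ z (s : ∀ i, S i),
      Integrable (Set.indicator {ω' | W z ω' = s} (fun _ => f s)) μ := by
    intro z s
    rw [integrable_indicator_iff (hset z s)]
    refine (integrableOn_const_iff enorm_ne_top).2 (Or.inr ?_)
    rw [hdist z s]
    exact ENNReal.ofReal_lt_top
  have hint : ∀ z, Integrable (fun ω => f (W z ω)) μ := by
    intro z
    rw [hdecomp z]
    exact integrable_finset_sum _ fun s _ => hindic z s
  have hInt : ∀ z, ∫ ω, f (W z ω) ∂μ = ∑ s, P s * f s := by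
    intro z
    rw [hdecomp z, integral_finset_sum _ fun s _ => hindic z s]
    refine Finset.sum_congr rfl fun s _ => ?_
    rw [integral_indicator_const _ (hset z s), measureReal_def, hdist z s,
      ENNReal.toReal_ofReal (hpos s).le, smul_eq_mul]
  have key : ∀ z (s : Set (∀ i, S i)), μ (W z ⁻¹' s)
      = ∑ a ∈ Finset.univ.filter (· ∈ s), ENNReal.ofReal (P a) := by
    intro z s
    have hu : W z ⁻¹' s = ⋃ a ∈ Finset.univ.filter (· ∈ s), {ω | W z ω = a} := by
      ext ω
      simp only [Set.mem_preimage, Set.mem_iUnion, Finset.mem_filter, Finset.mem_univ,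
        true_and, Set.mem_setOf_eq]
      exact ⟨fun h => ⟨W z ω, h, rfl⟩, fun ⟨a, ha, h⟩ => h ▸ ha⟩
    rw [hu, measure_biUnion_finset ?_ fun a _ => hset z a]
    · exact Finset.sum_congr rfl fun a _ => hdist z a
    · intro a _ b _ hab
      exact Set.disjoint_left.2 fun ω h1 h2 => hab (h1.symm.trans h2)
  have hWid : ∀ z, IdentDistrib (W z) (W 0) μ μ := by
    intro z
    refine ⟨(hmeas z).aemeasurable, (hmeas 0).aemeasurable, ?_⟩
    ext s hs
    rw [Measure.map_apply (hmeas z) hs, Measure.map_apply (hmeas 0) hs, key z s, key 0 s]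
  have hident : ∀ z, IdentDistrib (fun ω => f (W z ω)) (fun ω => f (W 0 ω)) μ μ :=
    fun z => (hWid z).comp (measurable_from_top (f := f))
  have hpind : Pairwise (Function.onFun (fun x1 x2 => IndepFun x1 x2 μ) fun z ω => f (W z ω)) :=
    fun i j hij => (hindep.indepFun hij).comp
      (measurable_from_top (f := f)) (measurable_from_top (f := f))
  constructor
  · have hsl := strong_law_ae_real (fun z ω => f (W z ω)) (hint 0) hpind hident
    rw [hInt 0, main_id hpos hsum] at hsl
    filter_upwards [hsl] with ω hω
    have heq : (fun Z : ℕ => ((1 : ℝ) / Z) * ∑ z ∈ Finset.range Z, G P (W z ω))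
        = fun n : ℕ => (∑ i ∈ Finset.range n, f (W i ω)) / n := by
      funext n
      rw [one_div_mul_eq_div]
    rw [heq]
    exact hω
  · rw [show (∫ ω, G P (W 0 ω) ∂μ) = ∫ ω, f (W 0 ω) ∂μ from rfl, hInt 0,
      main_id hpos hsum]
end
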